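/- Let \Omega be a regular cell complex whose geometric realization is a compact even-dimensional manifold M of dimension n. Then the flag h-vector of the face poset P of \Omega (a graded poset of rank n+2) satisfies h_S - h_{\bar{S}} = (-1)^{|S|}(2 - \chi(M)) for every S \subseteq {1,...,n+1}, where \bar{S} is the complement of S and \chi(M) is the Euler characteristic. If n is odd, then h_S = h_{\bar{S}} for all S. -/

import Mathlib

open Finset

/-- The ring `ℤ⟨a,b⟩` of noncommutative polynomials in the variables `a` and `b`,
realized as the monoid algebra of the free monoid on two letters
(`false` encodes the letter `a` and `true` the letter `b`). -/
abbrev AB : Type := MonoidAlgebra ℤ (FreeMonoid Bool)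

/-- The variable `a`. -/
noncomputable def aV : AB := MonoidAlgebra.single (FreeMonoid.ofList [false]) 1

/-- The variable `b`. -/
noncomputable def bV : AB := MonoidAlgebra.single (FreeMonoid.ofList [true]) 1

/-- The `ab`-monomial `u_S` of degree `n`, with `b` in the positions of `S`. -/
def word (n : ℕ) (S : Finset ℕ) : FreeMonoid Bool :=
  FreeMonoid.ofList (List.ofFn fun i : Fin n => decide ((i : ℕ) + 1 ∈ S))

/-- The flag `f`-vector entry `f_S`. -/
noncomputable def flagF (P : Type*) [PartialOrder P] (ρ : P → ℕ) (S : Finset ℕ) : ℤ :=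
  ({c : Finset P | IsChain (· ≤ ·) (↑c : Set P) ∧ c.image ρ = S} : Set (Finset P)).ncard

/-- The flag `h`-vector entry `h_S`. -/
noncomputable def flagH (P : Type*) [PartialOrder P] (ρ : P → ℕ) (S : Finset ℕ) : ℤ :=
  ∑ T ∈ S.powerset, (-1) ^ (S.card - T.card) * flagF P ρ T

/-- The `ab`-index `Ψ(P) = ∑_S h_S u_S` of a poset `P` of rank `n+1` with rank
function `ρ` (the elements of ranks `1,…,n` are the proper part of `P`). -/
noncomputable def Psi (P : Type*) [PartialOrder P] (ρ : P → ℕ) (n : ℕ) : AB :=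
  ∑ S ∈ (Finset.Icc 1 n).powerset, MonoidAlgebra.single (word n S) (flagH P ρ S)


open scoped Classical

/-- Extend a function on `ab`-monomials linearly to all of `ℤ⟨a,b⟩`. -/
noncomputable def extendMon (g : List Bool → AB) : AB → AB := fun w =>
  w.coeff.sum fun m c => c • g (FreeMonoid.toList m)

/-- The Möbius function of a finite poset. -/
noncomputable def muP (P : Type*) [PartialOrder P] [Fintype P] (x y : P) : ℤ :=
  letI := Classical.decEq P
  letI : @DecidableRel P P (· < ·) := Classical.decRel _
  letI : @DecidableRel P P (· ≤ ·) := Classical.decRel _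
  letI := Fintype.toLocallyFiniteOrder (α := P)
  IncidenceAlgebra.mu ℤ x y


/-! Let `E(S) = ∑ (-1)^|c|` over the chains `c` of the proper part of `P` whose ranks lie in `S`,
so that `h_S = (-1)^|S| E(S)`. Expanding the indicator of `ρ(c) ∩ S = ∅` by inclusion–exclusion
over the subchains `d ⊆ c` with ranks in `S` and exchanging the sums gives
`E(S̄) = ∑_d (-1)^|d| ∑_{c ⊇ d} (-1)^|c|`. By Philip Hall's theorem the inner sum factors over the
intervals into which `d` cuts `P`; for `d ≠ ∅` all of them are proper, hence Eulerian, and the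
inner sum is `(-1)^(n+1)`, while for `d = ∅` it is `-μ(P) = 1 - χ`. Thus
`E(S̄) = 1 - χ + (-1)^(n+1) (E(S) - 1)`, which is the claim for even `n`; for odd `n`, applying it
to both `S` and `S̄` forces `χ = 0`. -/

section Chains

variable {P : Type*} [PartialOrder P]

theorem IsChain.insert_filter_lt_union_filter_gt {c : Finset P} {y : P}
    (hc : IsChain (· ≤ ·) (c : Set P)) (hy : y ∈ c) :
    insert y ({z ∈ c | z < y} ∪ {z ∈ c | y < z}) = c := by
  ext z
  simp only [mem_insert, mem_union, mem_filter]
  constructor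
  · rintro (rfl | ⟨hz, _⟩ | ⟨hz, _⟩) <;> assumption
  · intro hz
    by_cases hzy : z = y
    · exact Or.inl hzy
    · rcases hc hz hy hzy with h | h
      · exact Or.inr (Or.inl ⟨hz, h.lt_of_ne hzy⟩)
      · exact Or.inr (Or.inr ⟨hz, h.lt_of_ne' hzy⟩)

theorem IsChain.exists_isGreatest {c : Finset P} (hc : IsChain (· ≤ ·) (c : Set P))
    (hne : c.Nonempty) : ∃ x, IsGreatest (c : Set P) x := by
  obtain ⟨x, hx⟩ := c.exists_maximal hne
  exact ⟨x, hx.prop, fun z hz => (hc.total hz hx.prop).elim id (hx.2 hz)⟩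

theorem IsChain.injOn_of_strictMono {ρ : P → ℕ}
    (hρ : StrictMono ρ) {s : Set P} (hs : IsChain (· ≤ ·) s) : s.InjOn ρ := by
  intro x hx y hy hxy
  by_contra hne
  rcases hs hx hy hne with h | h
  exacts [(hρ (h.lt_of_ne hne)).ne hxy, (hρ (h.lt_of_ne' hne)).ne' hxy]

end Chains

theorem neg_one_pow_sub_of_le {R : Type*} [Ring R] {m n : ℕ} (h : m ≤ n) :
    (-1 : R) ^ (n - m) = (-1) ^ n * (-1) ^ m := by
  obtain ⟨k, rfl⟩ := Nat.exists_eq_add_of_le h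
  rw [Nat.add_sub_cancel_left, pow_add, ((Commute.neg_one_left ((-1 : R) ^ k)).pow_left m).eq,
    mul_assoc, ← pow_add, Even.neg_one_pow ⟨m, rfl⟩, mul_one]

theorem neg_one_pow_card_sdiff {α : Type*} [DecidableEq α] {s t : Finset α} (h : s ⊆ t) :
    (-1 : ℤ) ^ #(t \ s) = (-1) ^ #t * (-1) ^ #s := by
  rw [card_sdiff_of_subset h, neg_one_pow_sub_of_le (card_le_card h)]

theorem sum_powerset_image_subset_neg_one_pow_card {α β : Type*} [DecidableEq β] (f : α → β)
    (c : Finset α) (S : Finset β) :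
    ∑ d ∈ c.powerset with d.image f ⊆ S, (-1 : ℤ) ^ #d =
      if Disjoint (c.image f) S then 1 else 0 := by
  rw [show {d ∈ c.powerset | d.image f ⊆ S} = {z ∈ c | f z ∈ S}.powerset by
      ext d; simp only [mem_filter, mem_powerset, subset_iff]; grind,
    sum_powerset_neg_one_pow_card]
  refine if_congr ?_ rfl rfl
  simp [filter_eq_empty_iff, disjoint_left]

namespace IncidenceAlgebra

variable {P : Type*} [PartialOrder P] [LocallyFiniteOrder P]

noncomputable def chainsIn (a b : P) : Finset (Finset P) :=
  {c ∈ (Ioo a b).powerset | IsChain (· ≤ ·) (c : Set P)}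

variable {a b x y : P} {c c₁ c₂ d : Finset P}

theorem mem_chainsIn : c ∈ chainsIn a b ↔ c ⊆ Ioo a b ∧ IsChain (· ≤ ·) (c : Set P) := by
  rw [chainsIn, mem_filter, mem_powerset]

theorem empty_mem_chainsIn (a b : P) : ∅ ∈ chainsIn a b := by
  simp [mem_chainsIn]

theorem mem_chainsIn_of_subset (hc : c ∈ chainsIn a b) (hdc : d ⊆ c) : d ∈ chainsIn a b :=
  mem_chainsIn.2 ⟨hdc.trans (mem_chainsIn.1 hc).1, (mem_chainsIn.1 hc).2.mono hdc⟩

theorem lt_of_mem_chainsIn (hc : c ∈ chainsIn a b) (hx : x ∈ c) : a < x ∧ x < b :=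
  mem_Ioo.1 ((mem_chainsIn.1 hc).1 hx)

theorem filter_lt_mem_chainsIn (hc : c ∈ chainsIn a b) : {z ∈ c | z < y} ∈ chainsIn a y :=
  mem_chainsIn.2 ⟨fun z hz => by
    simp only [mem_filter] at hz
    exact mem_Ioo.2 ⟨(lt_of_mem_chainsIn hc hz.1).1, hz.2⟩,
    (mem_chainsIn.1 hc).2.mono (coe_subset.2 (filter_subset _ _))⟩

theorem filter_gt_mem_chainsIn (hc : c ∈ chainsIn a b) : {z ∈ c | y < z} ∈ chainsIn y b :=
  mem_chainsIn.2 ⟨fun z hz => by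
    simp only [mem_filter] at hz
    exact mem_Ioo.2 ⟨hz.2, (lt_of_mem_chainsIn hc hz.1).2⟩,
    (mem_chainsIn.1 hc).2.mono (coe_subset.2 (filter_subset _ _))⟩

theorem insert_union_mem_chainsIn (hay : a < y) (hyb : y < b) (h₁ : c₁ ∈ chainsIn a y)
    (h₂ : c₂ ∈ chainsIn y b) : insert y (c₁ ∪ c₂) ∈ chainsIn a b := by
  have lt₁ := fun z (hz : z ∈ c₁) => lt_of_mem_chainsIn h₁ hz
  have lt₂ := fun z (hz : z ∈ c₂) => lt_of_mem_chainsIn h₂ hz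
  refine mem_chainsIn.2 ⟨fun z hz => ?_, ?_⟩
  · rcases mem_insert.1 hz with rfl | hz
    · exact mem_Ioo.2 ⟨hay, hyb⟩
    rcases mem_union.1 hz with hz | hz
    · exact mem_Ioo.2 ⟨(lt₁ z hz).1, (lt₁ z hz).2.trans hyb⟩
    · exact mem_Ioo.2 ⟨hay.trans (lt₂ z hz).1, (lt₂ z hz).2⟩
  rw [coe_insert, coe_union]
  refine (isChain_union.2 ⟨(mem_chainsIn.1 h₁).2, (mem_chainsIn.1 h₂).2, fun s hs t ht _ =>
    Or.inl ((lt₁ s hs).2.trans (lt₂ t ht).1).le⟩).insert fun z hz _ => ?_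
  rcases hz with hz | hz
  · exact Or.inr (lt₁ z hz).2.le
  · exact Or.inl (lt₂ z hz).1.le

theorem card_insert_union_of_mem_chainsIn (h₁ : c₁ ∈ chainsIn a y) (h₂ : c₂ ∈ chainsIn y b) :
    #(insert y (c₁ ∪ c₂)) = #c₁ + #c₂ + 1 := by
  have lt₁ := fun z (hz : z ∈ c₁) => lt_of_mem_chainsIn h₁ hz
  have lt₂ := fun z (hz : z ∈ c₂) => lt_of_mem_chainsIn h₂ hz
  rw [card_insert_of_notMem, card_union_of_disjoint]
  · exact disjoint_left.2 fun z hz₁ hz₂ => ((lt₁ z hz₁).2.trans (lt₂ z hz₂).1).false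
  · simp only [mem_union, not_or]
    exact ⟨fun h => (lt₁ y h).2.false, fun h => (lt₂ y h).1.false⟩

theorem erase_mem_chainsIn (hc : c ∈ chainsIn a b) (hx : IsGreatest (c : Set P) x) :
    c.erase x ∈ chainsIn a x := by
  refine mem_chainsIn.2
    ⟨fun z hz => ?_, (mem_chainsIn.1 hc).2.mono (coe_subset.2 (erase_subset _ _))⟩
  obtain ⟨hzx, hz⟩ := mem_erase.1 hz
  exact mem_Ioo.2 ⟨(lt_of_mem_chainsIn hc hz).1, (hx.2 hz).lt_of_ne hzx⟩

theorem subset_insert_union_iff (hd : d.erase y ∈ chainsIn a y) (h₂ : c₂ ∈ chainsIn y b) :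
    d ⊆ insert y (c₁ ∪ c₂) ↔ d.erase y ⊆ c₁ := by
  rw [subset_insert_iff]
  refine ⟨fun h z hz => (mem_union.1 (h hz)).resolve_right fun hz₂ => ?_,
    fun h => h.trans subset_union_left⟩
  exact ((lt_of_mem_chainsIn hd hz).2.trans (lt_of_mem_chainsIn h₂ hz₂).1).false

theorem sum_chainsIn_filter_mem {M : Type*} [AddCommMonoid M] (hay : a < y) (hyb : y < b)
    (f : Finset P → M) :
    ∑ c ∈ chainsIn a b with y ∈ c, f c =
      ∑ c₁ ∈ chainsIn a y, ∑ c₂ ∈ chainsIn y b, f (insert y (c₁ ∪ c₂)) := by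
  rw [← sum_product']
  refine sum_nbij' (fun c => ({z ∈ c | z < y}, {z ∈ c | y < z}))
    (fun p => insert y (p.1 ∪ p.2)) (fun c hc => ?_) (fun p hp => ?_) (fun c hc => ?_)
    (fun p hp => ?_) (fun c hc => ?_)
  · simp only [mem_filter] at hc
    exact mem_product.2 ⟨filter_lt_mem_chainsIn hc.1, filter_gt_mem_chainsIn hc.1⟩
  · rw [mem_product] at hp
    exact mem_filter.2 ⟨insert_union_mem_chainsIn hay hyb hp.1 hp.2, mem_insert_self _ _⟩
  · simp only [mem_filter] at hc
    exact (mem_chainsIn.1 hc.1).2.insert_filter_lt_union_filter_gt hc.2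
  · rw [mem_product] at hp
    have lt₁ := fun z (hz : z ∈ p.1) => lt_of_mem_chainsIn hp.1 hz
    have lt₂ := fun z (hz : z ∈ p.2) => lt_of_mem_chainsIn hp.2 hz
    refine Prod.ext ?_ ?_ <;> ext z <;> simp only [mem_filter, mem_insert, mem_union] <;>
      constructor
    · rintro ⟨rfl | hz | hz, hzy⟩
      exacts [hzy.false.elim, hz, ((lt₂ z hz).1.trans hzy).false.elim]
    · exact fun hz => ⟨Or.inr (Or.inl hz), (lt₁ z hz).2⟩
    · rintro ⟨rfl | hz | hz, hzy⟩
      exacts [hzy.false.elim, ((lt₁ z hz).2.trans hzy).false.elim, hz]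
    · exact fun hz => ⟨Or.inr (Or.inr hz), (lt₂ z hz).1⟩
  · simp only [mem_filter] at hc
    rw [(mem_chainsIn.1 hc.1).2.insert_filter_lt_union_filter_gt hc.2]

theorem right_notMem_of_mem_chainsIn (hc : c ∈ chainsIn a b) : b ∉ c :=
  fun h => (lt_of_mem_chainsIn hc h).2.false

theorem sum_chainsIn_eq_add_sum_insert {M : Type*} [AddCommMonoid M] (f : Finset P → M)
    (a b : P) :
    ∑ c ∈ chainsIn a b, f c = f ∅ + ∑ x ∈ Ioo a b, ∑ c ∈ chainsIn a x, f (insert x c) := by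
  rw [← add_sum_erase _ _ (empty_mem_chainsIn a b), sum_sigma']
  congr 1
  have le_of_insert_eq {x y : P} {c d : Finset P} (hc : c ∈ chainsIn a x)
      (h : insert x c = insert y d) : y ≤ x := by
    rcases mem_insert.1 (h ▸ mem_insert_self y d) with rfl | hy
    exacts [le_rfl, (lt_of_mem_chainsIn hc hy).2.le]
  refine (sum_nbij (fun p : (_ : P) × Finset P => insert p.1 p.2) (fun p hp => ?_)
    (fun p hp q hq hpq => ?_) (fun c hc => ?_) (fun _ _ => rfl)).symm
  · obtain ⟨hx, hc⟩ := mem_sigma.1 hp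
    refine mem_erase.2 ⟨insert_ne_empty _ _, ?_⟩
    simpa using insert_union_mem_chainsIn (mem_Ioo.1 hx).1 (mem_Ioo.1 hx).2 hc
      (empty_mem_chainsIn _ b)
  · simp only at hpq
    obtain ⟨-, hp⟩ := mem_sigma.1 hp
    obtain ⟨-, hq⟩ := mem_sigma.1 hq
    have hx : p.1 = q.1 := le_antisymm (le_of_insert_eq hq hpq.symm) (le_of_insert_eq hp hpq)
    refine Sigma.ext hx (heq_of_eq ?_)
    calc p.2 = (insert p.1 p.2).erase p.1 := (erase_insert (right_notMem_of_mem_chainsIn hp)).symm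
      _ = (insert q.1 q.2).erase q.1 := by rw [hpq, hx]
      _ = q.2 := erase_insert (right_notMem_of_mem_chainsIn hq)
  · obtain ⟨hne, hc⟩ := mem_erase.1 (mem_coe.1 hc)
    obtain ⟨hcab, hchain⟩ := mem_chainsIn.1 hc
    obtain ⟨x, hx⟩ := hchain.exists_isGreatest (nonempty_iff_ne_empty.2 hne)
    exact ⟨⟨x, c.erase x⟩, mem_sigma.2 ⟨hcab hx.1, erase_mem_chainsIn hc hx⟩, insert_erase hx.1⟩

theorem mu_eq_neg_sum_chainsIn {𝕜 : Type*} [Ring 𝕜] (hab : a < b) :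
    mu 𝕜 a b = -∑ c ∈ chainsIn a b, (-1 : 𝕜) ^ #c := by
  induction hn : #(Ioo a b) using Nat.strong_induction_on generalizing b with
  | _ n ih =>
  have hsub : ∀ x ∈ Ioo a b, mu 𝕜 a x = -∑ c ∈ chainsIn a x, (-1 : 𝕜) ^ #c := by
    intro x hx
    refine ih _ (hn ▸ card_lt_card ?_) (mem_Ioo.1 hx).1 rfl
    exact ssubset_of_subset_of_ne (Ioo_subset_Ioo_right (mem_Ioo.1 hx).2.le)
      fun h => right_notMem_Ioo (h ▸ hx)
  rw [mu_eq_neg_sum_Ico_of_ne hab.ne, ← Ioo_insert_left hab, sum_insert left_notMem_Ioo, mu_self,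
    sum_congr rfl hsub, sum_chainsIn_eq_add_sum_insert]
  rw [card_empty, pow_zero]
  congr 2
  refine sum_congr rfl fun x _ => ?_
  rw [← sum_neg_distrib]
  refine sum_congr rfl fun c hc => ?_
  rw [card_insert_of_notMem (right_notMem_of_mem_chainsIn hc), pow_succ, mul_neg_one]

theorem sum_chainsIn_superset_of_eulerian {ρ : P → ℕ} (hρ : Monotone ρ) (hab : a < b)
    (hd : d ∈ chainsIn a b)
    (hE : ∀ x y, a ≤ x → x < y → y ≤ b → (a < x ∨ y < b ∨ d = ∅) →
      mu ℤ x y = (-1) ^ (ρ y - ρ x)) :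
    ∑ c ∈ chainsIn a b with d ⊆ c, (-1 : ℤ) ^ #c = -(-1) ^ (ρ b - ρ a) := by
  induction hn : #d using Nat.strong_induction_on generalizing b d with
  | _ n ih =>
  rcases d.eq_empty_or_nonempty with rfl | hne
  · rw [filter_true_of_mem fun c _ => empty_subset c, ← neg_neg (∑ c ∈ _, _),
      ← mu_eq_neg_sum_chainsIn hab, hE a b le_rfl hab le_rfl (Or.inr (Or.inr rfl))]
  obtain ⟨y, hy⟩ := (mem_chainsIn.1 hd).2.exists_isGreatest hne
  obtain ⟨hay, hyb⟩ := lt_of_mem_chainsIn hd hy.1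
  have hd' := erase_mem_chainsIn hd hy
  have ih' := ih _ (hn ▸ card_erase_lt_of_mem hy.1) hay hd'
    (fun x z hax hxz hzy _ =>
      hE x z hax hxz (hzy.trans hyb.le) (Or.inr (Or.inl (hzy.trans_lt hyb)))) rfl
  have hρy := hρ hay.le
  have hρb := hρ hyb.le
  rw [show {c ∈ chainsIn a b | d ⊆ c} = {c ∈ {c ∈ chainsIn a b | y ∈ c} | d ⊆ c} by
      rw [filter_filter]; exact filter_congr fun c _ => ⟨fun h => ⟨h hy.1, h⟩, And.right⟩,
    sum_filter, sum_chainsIn_filter_mem hay hyb]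
  calc _ = ∑ c₁ ∈ chainsIn a y, ∑ c₂ ∈ chainsIn y b,
        -((if d.erase y ⊆ c₁ then (-1 : ℤ) ^ #c₁ else 0) * (-1) ^ #c₂) :=
        sum_congr rfl fun c₁ h₁ => sum_congr rfl fun c₂ h₂ => by
          simp only [subset_insert_union_iff hd' h₂, card_insert_union_of_mem_chainsIn h₁ h₂]
          split_ifs <;> ring
    _ = -((∑ c₁ ∈ chainsIn a y with d.erase y ⊆ c₁, (-1 : ℤ) ^ #c₁) *
          ∑ c₂ ∈ chainsIn y b, (-1) ^ #c₂) := by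
        simp only [sum_filter, sum_mul_sum, sum_neg_distrib]
    _ = -(-1) ^ (ρ b - ρ a) := by
        rw [ih', ← neg_neg (∑ c ∈ chainsIn y b, _), ← mu_eq_neg_sum_chainsIn hyb,
          hE y b hay.le hyb le_rfl (Or.inl hay), neg_mul_neg, ← pow_add]
        congr 2
        omega

end IncidenceAlgebra

section RankSelection

open IncidenceAlgebra

variable {P : Type*} [PartialOrder P] [LocallyFiniteOrder P] [BoundedOrder P] {ρ : P → ℕ}

/-- By Philip Hall's theorem this is `-μ(P_S)` for the rank-selected subposet
`P_S = {x | ρ x ∈ S} ∪ {⊥, ⊤}`. -/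
noncomputable def signedChainSum (ρ : P → ℕ) (S : Finset ℕ) : ℤ :=
  ∑ c ∈ chainsIn (⊥ : P) ⊤ with c.image ρ ⊆ S, (-1) ^ #c

theorem flagF_eq_card_chainsIn {T : Finset ℕ} (hbot : ρ ⊥ ∉ T) (htop : ρ ⊤ ∉ T) :
    flagF P ρ T = #{c ∈ chainsIn (⊥ : P) ⊤ | c.image ρ = T} := by
  rw [flagF, ← Set.ncard_coe_finset, coe_filter]
  congr 2
  ext c
  refine and_congr_left fun hc => ⟨fun hchain => mem_chainsIn.2 ⟨fun z hz => ?_, hchain⟩,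
    fun h => (mem_chainsIn.1 h).2⟩
  have hz : ρ z ∈ T := hc ▸ mem_image_of_mem ρ hz
  exact mem_Ioo.2 ⟨bot_lt_iff_ne_bot.2 fun h => hbot (h ▸ hz),
    lt_top_iff_ne_top.2 fun h => htop (h ▸ hz)⟩

theorem flagH_eq_neg_one_pow_mul_signedChainSum (hρ : StrictMono ρ) {S : Finset ℕ}
    (hbot : ρ ⊥ ∉ S) (htop : ρ ⊤ ∉ S) :
    flagH P ρ S = (-1) ^ #S * signedChainSum ρ S := by
  rw [flagH, signedChainSum, mul_sum, ← sum_fiberwise_of_maps_to (g := image ρ) (t := S.powerset)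
    fun c hc => mem_powerset.2 (mem_filter.1 hc).2]
  refine sum_congr rfl fun T hT => ?_
  have hTS := mem_powerset.1 hT
  rw [filter_filter, flagF_eq_card_chainsIn (fun h => hbot (hTS h)) fun h => htop (hTS h),
    neg_one_pow_sub_of_le (card_le_card hTS), mul_assoc, natCast_card_filter, mul_sum, mul_sum,
    sum_filter]
  refine sum_congr rfl fun c hc => ?_
  by_cases hcT : c.image ρ = T
  · rw [if_pos hcT, if_pos ⟨hcT ▸ hTS, hcT⟩, mul_one, ← hcT,
      card_image_of_injOn ((mem_chainsIn.1 hc).2.injOn_of_strictMono hρ)]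
  · rw [if_neg hcT, if_neg fun h => hcT h.2, mul_zero, mul_zero]

theorem signedChainSum_sdiff [Nontrivial P] (hρ : StrictMono ρ)
    (hE : ∀ x y : P, x < y → ¬(x = ⊥ ∧ y = ⊤) → mu ℤ x y = (-1) ^ (ρ y - ρ x))
    {R : Finset ℕ} (hR : ∀ x : P, ⊥ < x → x < ⊤ → ρ x ∈ R) (S : Finset ℕ) :
    signedChainSum ρ (R \ S) =
      -mu ℤ (⊥ : P) ⊤ - (-1) ^ (ρ ⊤ - ρ ⊥) * (signedChainSum ρ S - 1) := by
  set C := chainsIn (⊥ : P) ⊤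
  have superset_sum : ∀ d ∈ C, ∑ c ∈ C with d ⊆ c, (-1 : ℤ) ^ #c =
      if d = ∅ then -mu ℤ (⊥ : P) ⊤ else -(-1) ^ (ρ ⊤ - ρ ⊥) := by
    intro d hd
    split_ifs with h
    · rw [h, filter_true_of_mem fun c _ => empty_subset c, mu_eq_neg_sum_chainsIn bot_lt_top,
        neg_neg]
    · refine sum_chainsIn_superset_of_eulerian hρ.monotone bot_lt_top hd
        fun x y _ hxy _ hne => hE x y hxy ?_
      rintro ⟨rfl, rfl⟩
      simp [h] at hne
  have hempty : ∅ ∈ {d ∈ C | d.image ρ ⊆ S} := mem_filter.2 ⟨empty_mem_chainsIn _ _, by simp⟩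
  calc signedChainSum ρ (R \ S)
      = ∑ c ∈ C, (-1) ^ #c * ∑ d ∈ c.powerset with d.image ρ ⊆ S, (-1 : ℤ) ^ #d := by
        rw [signedChainSum, sum_filter]
        refine sum_congr rfl fun c hc => ?_
        rw [sum_powerset_image_subset_neg_one_pow_card, mul_ite, mul_one, mul_zero]
        refine if_congr (subset_sdiff.trans (and_iff_right (image_subset_iff.2 fun z hz => ?_))) rfl
          rfl
        exact hR z (lt_of_mem_chainsIn hc hz).1 (lt_of_mem_chainsIn hc hz).2
    _ = ∑ d ∈ C with d.image ρ ⊆ S, (-1) ^ #d * ∑ c ∈ C with d ⊆ c, (-1 : ℤ) ^ #c := by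
        simp only [mul_sum]
        refine sum_comm' (fun c d => ?_) |>.trans (sum_congr rfl fun d _ => sum_congr rfl
          fun c _ => mul_comm _ _)
        simp only [mem_filter, mem_powerset]
        exact ⟨fun ⟨hc, hdc, hd⟩ => ⟨⟨hc, hdc⟩, mem_chainsIn_of_subset hc hdc, hd⟩,
          fun ⟨⟨hc, hdc⟩, _, hd⟩ => ⟨hc, hdc, hd⟩⟩
    _ = -mu ℤ (⊥ : P) ⊤ - (-1) ^ (ρ ⊤ - ρ ⊥) * (signedChainSum ρ S - 1) := by
        rw [sum_congr rfl fun d hd => by rw [superset_sum d (mem_filter.1 hd).1],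
          signedChainSum, ← add_sum_erase _ _ hempty, ← add_sum_erase _ _ hempty, if_pos rfl,
          sum_congr rfl fun d hd => by rw [if_neg (ne_of_mem_erase hd)], ← sum_mul]
        simp only [card_empty, pow_zero]
        ring

end RankSelection

theorem muP_eq_mu {P : Type*} [PartialOrder P] [Fintype P] [LocallyFiniteOrder P] (x y : P) :
    muP P x y = IncidenceAlgebra.mu ℤ x y := by
  unfold muP
  congr!
  exact Subsingleton.elim _ _

theorem flagH_complement_manifold_general (n : ℕ) (χ : ℤ) (P : Type*) [Fintype P]
    [PartialOrder P] [BoundedOrder P] (ρ : P → ℕ)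
    (hbot : ρ ⊥ = 0) (htop : ρ ⊤ = n + 2)
    (hstrict : ∀ x y : P, x < y → ρ x < ρ y)
    (hproper : ∀ x y : P, x ≤ y → ¬(x = ⊥ ∧ y = ⊤) → muP P x y = (-1) ^ (ρ y - ρ x))
    (hmu : muP P (⊥ : P) ⊤ = χ - 1) :
    (Even n → ∀ S ⊆ Finset.Icc 1 (n + 1),
      flagH P ρ S - flagH P ρ (Finset.Icc 1 (n + 1) \ S) = (-1) ^ S.card * (2 - χ)) ∧
    (Odd n → ∀ S ⊆ Finset.Icc 1 (n + 1),
      flagH P ρ S = flagH P ρ (Finset.Icc 1 (n + 1) \ S)) := by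
  have : LocallyFiniteOrder P := Fintype.toLocallyFiniteOrder
  have hρ : StrictMono ρ := fun x y => hstrict x y
  have : Nontrivial P := ⟨⊥, ⊤, fun h => by simp [h, htop] at hbot⟩
  set I := Icc 1 (n + 1)
  have hI : ∀ x : P, ⊥ < x → x < ⊤ → ρ x ∈ I := fun x hx₁ hx₂ => by
    have := hρ hx₁
    have := hρ hx₂
    rw [mem_Icc]
    omega
  have key (S : Finset ℕ) :
      signedChainSum ρ (I \ S) = 1 - χ - (-1) ^ n * (signedChainSum ρ S - 1) := by
    rw [signedChainSum_sdiff hρ (fun x y hxy h => muP_eq_mu x y ▸ hproper x y hxy.le h) hI,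
      ← muP_eq_mu, hmu, htop, hbot, Nat.sub_zero]
    ring
  have hH : ∀ S ⊆ I, flagH P ρ S = (-1) ^ #S * signedChainSum ρ S := fun S hS =>
    flagH_eq_neg_one_pow_mul_signedChainSum hρ (fun h => by simpa [I, hbot] using hS h)
      (fun h => by simpa [I, htop] using hS h)
  have hsign : ∀ S ⊆ I, (-1 : ℤ) ^ #(I \ S) = -(-1) ^ n * (-1) ^ #S := fun S hS => by
    rw [neg_one_pow_card_sdiff hS, Nat.card_Icc, Nat.add_sub_cancel, pow_succ]
    ring
  refine ⟨fun hn S hS => ?_, fun hn S hS => ?_⟩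
  · rw [hH S hS, hH _ sdiff_subset, hsign S hS, key, hn.neg_one_pow]
    ring
  · have hχ : χ = 0 := by
      have := key (I \ S)
      rw [Finset.sdiff_sdiff_eq_self hS, key, hn.neg_one_pow] at this
      linarith
    rw [hH S hS, hH _ sdiff_subset, hsign S hS, key, hn.neg_one_pow, hχ]
    ring

/-- Let `P` be the face poset (a graded poset of rank `n+2` all of whose proper
intervals are Eulerian, with `μ(P) = χ(M) - 1`) of a regular cell complex whose
geometric realization is a compact `n`-manifold `M`.  If `n` is even then
`h_S - h_{S̄} = (-1)^{|S|}(2 - χ(M))` for every `S ⊆ {1,…,n+1}`, and if `n` is odd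
then `h_S = h_{S̄}`. -/
theorem flagH_complement_manifold (n : ℕ) (χ : ℤ) (P : Type*) [Fintype P]
    [PartialOrder P] [BoundedOrder P] (ρ : P → ℕ)
    (hbot : ρ ⊥ = 0) (htop : ρ ⊤ = n + 2)
    (hstrict : ∀ x y : P, x < y → ρ x < ρ y)
    (hcov : ∀ x y : P, x ⋖ y → ρ y = ρ x + 1)
    (hproper : ∀ x y : P, x ≤ y → ¬(x = ⊥ ∧ y = ⊤) → muP P x y = (-1) ^ (ρ y - ρ x))
    (hmu : muP P (⊥ : P) ⊤ = χ - 1) :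
    (Even n → ∀ S ⊆ Finset.Icc 1 (n + 1),
      flagH P ρ S - flagH P ρ (Finset.Icc 1 (n + 1) \ S) = (-1) ^ S.card * (2 - χ)) ∧
    (Odd n → ∀ S ⊆ Finset.Icc 1 (n + 1),
      flagH P ρ S = flagH P ρ (Finset.Icc 1 (n + 1) \ S)) :=
  flagH_complement_manifold_general n χ P ρ hbot htop hstrict hproper hmu
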